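/- arXiv:math/0510307 — 4 statements merged into one kernel-verified Lean document; each statement's English description precedes it below -/
import Mathlib

section
/- Let A_a, A_b, A_c be n×n integer symmetric matrices such that A_{ab} := A_b - A_a, A_{bc} := A_c - A_b, and A_{ac} := A_c - A_a are all invertible. For μ ∈ ℤⁿ/A_{ab}ℤⁿ define T^μ_{A_{ab}} : 𝒮(ℝⁿ) → C^∞(ℝⁿ) by (T^μ_{A_{ab}} ξ)(x) = Σ_{w∈ℤⁿ} ξ(x + w - A_{ab}^{-1}μ). Then for ξ_{ab}, ξ_{bc} ∈ 𝒮(ℝⁿ), the pointwise product satisfies (T^μ_{A_{ab}} ξ_{ab})·(T^ν_{A_{bc}} ξ_{bc}) = Σ_{ρ ∈ ℤⁿ/A_{ac}ℤⁿ} T^ρ_{A_{ac}} ξ^ρ_{ac}, where ξ^ρ_{ac}(x) = Σ_{u∈ℤⁿ} δ^μ_{-u+ρ}[A_{ab}] δ^ν_u[A_{bc}] ξ_{ab}(x + A_{ab}^{-1}(u - A_{bc}A_{ac}^{-1}ρ)) ξ_{bc}(x - A_{bc}^{-1}(u - A_{bc}A_{ac}^{-1}ρ)), and δ^μ_ρ[A]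 equals 1 if ρ - μ ∈ Aℤⁿ and 0 otherwise. -/
open Matrix Classical

noncomputable section

/-- Cast an integer vector to a real vector. -/
def intVec {n : ℕ} (w : Fin n → ℤ) : Fin n → ℝ := fun i => (w i : ℝ)

/-- Cast an integer matrix to a real matrix. -/
def matR {n : ℕ} (A : Matrix (Fin n) (Fin n) ℤ) : Matrix (Fin n) (Fin n) ℝ :=
  A.map (fun x => (x : ℝ))

/-- Kronecker delta mod `A ℤⁿ`: 1 if `ρ - μ ∈ A ℤⁿ`, 0 otherwise. -/
def deltaMod {n : ℕ} (A : Matrix (Fin n) (Fin n) ℤ) (μ ρ : Fin n → ℤ) : ℝ :=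
  if ∃ m : Fin n → ℤ, ρ - μ = A.mulVec m then 1 else 0

/-- `(T^μ_A ξ)(x) = Σ_{w ∈ ℤⁿ} ξ(x + w - A⁻¹ μ)`. -/
def Tmap {n : ℕ} (A : Matrix (Fin n) (Fin n) ℤ) (μ : Fin n → ℤ)
    (ξ : (Fin n → ℝ) → ℝ) (x : Fin n → ℝ) : ℝ :=
  ∑' w : Fin n → ℤ, ξ (x + intVec w - (matR A)⁻¹.mulVec (intVec μ))

section Helpers
variable {n : ℕ}

lemma intVec_add {n : ℕ} (v w : Fin n → ℤ) : intVec (v + w) = intVec v + intVec w := by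
  funext i; simp [intVec]
lemma intVec_sub {n : ℕ} (v w : Fin n → ℤ) : intVec (v - w) = intVec v - intVec w := by
  funext i; simp [intVec]
lemma intVec_neg {n : ℕ} (v : Fin n → ℤ) : intVec (-v) = -intVec v := by
  funext i; simp [intVec]
lemma intVec_injective {n : ℕ} : Function.Injective (intVec (n := n)) := by
  intro v w h
  funext i
  have := congrFun h i
  simpa [intVec] using this
lemma matR_mulVec {n : ℕ} (A : Matrix (Fin n) (Fin n) ℤ) (v : Fin n → ℤ) :
    (matR A).mulVec (intVec v) = intVec (A.mulVec v) := by
  funext i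
  simp [matR, intVec, Matrix.mulVec, dotProduct]
lemma matR_add {n : ℕ} (A B : Matrix (Fin n) (Fin n) ℤ) : matR (A + B) = matR A + matR B := by
  ext i j; simp [matR]
lemma matR_isUnit_det {n : ℕ} (A : Matrix (Fin n) (Fin n) ℤ) (h : A.det ≠ 0) :
    IsUnit (matR A).det := by
  have : (matR A).det = ((A.det : ℤ) : ℝ) := ((Int.castRingHom ℝ).map_det A).symm
  rw [this]
  simp [isUnit_iff_ne_zero, h]

lemma mulVec_real_injective (B : Matrix (Fin n) (Fin n) ℝ) (h : IsUnit B.det) :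
    Function.Injective B.mulVec := by
  intro v w hvw
  have h1 := Matrix.nonsing_inv_mul B h
  calc v = (B⁻¹ * B).mulVec v := by rw [h1, Matrix.one_mulVec]
    _ = B⁻¹.mulVec (B.mulVec v) := by rw [← Matrix.mulVec_mulVec]
    _ = B⁻¹.mulVec (B.mulVec w) := by rw [hvw]
    _ = (B⁻¹ * B).mulVec w := by rw [Matrix.mulVec_mulVec]
    _ = w := by rw [h1, Matrix.one_mulVec]

lemma inv_add_identity (Bab Bbc Bac : Matrix (Fin n) (Fin n) ℝ) (hsum : Bac = Bab + Bbc)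
    (h1 : IsUnit Bab.det) (h3 : IsUnit Bac.det) :
    Bab⁻¹ * (Bbc * Bac⁻¹) + Bac⁻¹ = Bab⁻¹ := by
  calc Bab⁻¹ * (Bbc * Bac⁻¹) + Bac⁻¹
      = Bab⁻¹ * Bbc * Bac⁻¹ + (Bab⁻¹ * Bab) * Bac⁻¹ := by
        rw [Matrix.nonsing_inv_mul _ h1, Matrix.one_mul, Matrix.mul_assoc]
    _ = (Bab⁻¹ * (Bbc + Bab)) * Bac⁻¹ := by rw [Matrix.mul_add, Matrix.add_mul]
    _ = (Bab⁻¹ * Bac) * Bac⁻¹ := by rw [add_comm Bbc Bab, ← hsum]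
    _ = Bab⁻¹ := by rw [Matrix.mul_assoc, Matrix.mul_nonsing_inv _ h3, Matrix.mul_one]

lemma inv_cancel_identity (Bbc Bac : Matrix (Fin n) (Fin n) ℝ) (h2 : IsUnit Bbc.det) :
    Bbc⁻¹ * (Bbc * Bac⁻¹) = Bac⁻¹ := by
  rw [← Matrix.mul_assoc, Matrix.nonsing_inv_mul _ h2, Matrix.one_mul]
lemma mulVec_int_injective (A : Matrix (Fin n) (Fin n) ℤ) (h : A.det ≠ 0) :
    Function.Injective A.mulVec := by
  intro v w hvw
  apply intVec_injective
  apply mulVec_real_injective (matR A) (matR_isUnit_det A h)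
  rw [matR_mulVec, matR_mulVec, hvw]

lemma arg1 (Aab Abc Aac : Matrix (Fin n) (Fin n) ℤ) (hsum : Aac = Aab + Abc)
    (h1 : Aab.det ≠ 0) (h3 : Aac.det ≠ 0)
    (u ρ μ m1 : Fin n → ℤ) (hm1 : (-u + ρ) - μ = Aab.mulVec m1)
    (x : Fin n → ℝ) (w : Fin n → ℤ) :
    x + intVec w - (matR Aac)⁻¹.mulVec (intVec ρ)
      + (matR Aab)⁻¹.mulVec (intVec u - (matR Abc * (matR Aac)⁻¹).mulVec (intVec ρ))
    = x + intVec (w - m1) - (matR Aab)⁻¹.mulVec (intVec μ) := by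
  have h1' := matR_isUnit_det _ h1
  have h3' := matR_isUnit_det _ h3
  have hBsum : matR Aac = matR Aab + matR Abc := by rw [hsum, matR_add]
  have hId := inv_add_identity (matR Aab) (matR Abc) (matR Aac) hBsum h1' h3'
  have hint : u - ρ = -μ - Aab.mulVec m1 := by rw [← hm1]; abel
  have hcast : intVec u - intVec ρ = -(intVec μ) - (matR Aab).mulVec (intVec m1) := by
    rw [← intVec_sub, hint, intVec_sub, intVec_neg, matR_mulVec]
  calc x + intVec w - (matR Aac)⁻¹.mulVec (intVec ρ)
      + (matR Aab)⁻¹.mulVec (intVec u - (matR Abc * (matR Aac)⁻¹).mulVec (intVec ρ))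
      = x + intVec w + ((matR Aab)⁻¹.mulVec (intVec u)
          - (((matR Aab)⁻¹ * ((matR Abc) * (matR Aac)⁻¹)) + (matR Aac)⁻¹).mulVec (intVec ρ)) := by
        rw [Matrix.mulVec_sub, Matrix.mulVec_mulVec, Matrix.add_mulVec, ← Matrix.mul_assoc]
        abel
    _ = x + intVec w + (matR Aab)⁻¹.mulVec (intVec u - intVec ρ) := by
        rw [hId, Matrix.mulVec_sub]
    _ = x + intVec w + (-((matR Aab)⁻¹.mulVec (intVec μ)) - intVec m1) := by
        rw [hcast, Matrix.mulVec_sub, Matrix.mulVec_neg, Matrix.mulVec_mulVec,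
          Matrix.nonsing_inv_mul _ h1', Matrix.one_mulVec]
    _ = x + intVec (w - m1) - (matR Aab)⁻¹.mulVec (intVec μ) := by
        rw [intVec_sub]; abel

lemma arg2 (Abc Aac : Matrix (Fin n) (Fin n) ℤ)
    (h2 : Abc.det ≠ 0)
    (u ρ ν m2 : Fin n → ℤ) (hm2 : u - ν = Abc.mulVec m2)
    (x : Fin n → ℝ) (w : Fin n → ℤ) :
    x + intVec w - (matR Aac)⁻¹.mulVec (intVec ρ)
      - (matR Abc)⁻¹.mulVec (intVec u - (matR Abc * (matR Aac)⁻¹).mulVec (intVec ρ))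
    = x + intVec (w - m2) - (matR Abc)⁻¹.mulVec (intVec ν) := by
  have h2' := matR_isUnit_det _ h2
  have hId := inv_cancel_identity (matR Abc) (matR Aac) h2'
  have hcast : intVec u = intVec ν + (matR Abc).mulVec (intVec m2) := by
    have : u = ν + Abc.mulVec m2 := by rw [← hm2]; abel
    rw [matR_mulVec, this]; funext i; simp [intVec]
  calc x + intVec w - (matR Aac)⁻¹.mulVec (intVec ρ)
      - (matR Abc)⁻¹.mulVec (intVec u - (matR Abc * (matR Aac)⁻¹).mulVec (intVec ρ))
      = x + intVec w - (matR Aac)⁻¹.mulVec (intVec ρ)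
        - ((matR Abc)⁻¹.mulVec (intVec u) - ((matR Abc)⁻¹ * ((matR Abc) * (matR Aac)⁻¹)).mulVec (intVec ρ)) := by
        rw [Matrix.mulVec_sub, Matrix.mulVec_mulVec, ← Matrix.mul_assoc, Matrix.mul_assoc]
    _ = x + intVec w - (matR Abc)⁻¹.mulVec (intVec u) := by rw [hId]; abel
    _ = x + intVec w - ((matR Abc)⁻¹.mulVec (intVec ν) + intVec m2) := by
        rw [hcast, Matrix.mulVec_add, Matrix.mulVec_mulVec, Matrix.nonsing_inv_mul _ h2',
          Matrix.one_mulVec]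
    _ = x + intVec (w - m2) - (matR Abc)⁻¹.mulVec (intVec ν) := by
        rw [intVec_sub]; abel

lemma summable_int_decay : Summable fun m : ℤ => ((1 + |(m : ℝ)|) ^ 2)⁻¹ := by
  have hnat : Summable fun k : ℕ => ((1 + (k : ℝ)) ^ 2)⁻¹ := by
    have h : Summable (fun n : ℕ => 1 / (n : ℝ) ^ 2) := Real.summable_one_div_nat_pow.mpr (by norm_num)
    have h1 := (summable_nat_add_iff 1).mpr h
    refine h1.congr fun k => ?_
    push_cast
    rw [one_div, add_comm]
  refine Summable.of_nat_of_neg (hnat.congr fun k => by simp) (hnat.congr fun k => by simp)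

lemma summable_pi_decay : ∀ n : ℕ, Summable fun w : Fin n → ℤ => ∏ i, ((1 + |(w i : ℝ)|) ^ 2)⁻¹
  | 0 => by
    haveI : Subsingleton (Fin 0 → ℤ) := ⟨fun a b => funext fun i => i.elim0⟩
    exact ⟨_, hasSum_single (fun _ => (0:ℤ)) fun b hb =>
      absurd (Subsingleton.elim b _) hb⟩
  | (n + 1) => by
    rw [← (Fin.consEquiv (fun _ : Fin (n+1) => ℤ)).summable_iff]
    have hs := summable_int_decay.mul_of_nonneg (summable_pi_decay n)
      (fun _ => by positivity) (fun _ => by positivity)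
    refine hs.congr fun p => ?_
    simp only [Function.comp, Fin.consEquiv_apply]
    rw [Fin.prod_univ_succ]
    simp [Fin.cons_zero, Fin.cons_succ]

lemma schwartz_decay_aux {n : ℕ} (ξ : SchwartzMap (Fin n → ℝ) ℝ) :
    ∃ C : ℝ, 0 ≤ C ∧ ∀ z, ‖ξ z‖ ≤ C * ((1 + ‖z‖) ^ (2 * n))⁻¹ := by
  refine ⟨2 ^ (2 * n) * (Finset.Iic (2 * n, 0)).sup
    (fun m => SchwartzMap.seminorm ℝ m.1 m.2) ξ,
    mul_nonneg (by positivity) (apply_nonneg _ _), fun z => ?_⟩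
  have h := SchwartzMap.one_add_le_sup_seminorm_apply (𝕜 := ℝ) (m := (2 * n, 0))
    le_rfl le_rfl ξ z
  rw [norm_iteratedFDeriv_zero] at h
  have hz : (0:ℝ) < (1 + ‖z‖) ^ (2 * n) := by positivity
  rw [mul_comm _ ((1 + ‖z‖) ^ (2 * n))⁻¹, ← div_eq_inv_mul, le_div_iff₀ hz]
  calc ‖ξ z‖ * (1 + ‖z‖) ^ (2*n) = (1 + ‖z‖) ^ (2*n) * ‖ξ z‖ := by ring
    _ ≤ _ := h

lemma summable_schwartz {n : ℕ} (ξ : SchwartzMap (Fin n → ℝ) ℝ) (y : Fin n → ℝ) :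
    Summable fun w : Fin n → ℤ => ‖ξ (y + intVec w)‖ := by
  obtain ⟨C, hC0, hC⟩ := schwartz_decay_aux ξ
  refine Summable.of_nonneg_of_le (fun w => norm_nonneg _) (fun w => ?_)
    (((summable_pi_decay n).mul_left (C * (1 + ‖y‖) ^ (2 * n))))
  set P := ∏ i, ((1:ℝ) + |(w i : ℝ)|) ^ 2 with hPdef
  have hProdInv : (∏ i, (((1:ℝ) + |(w i : ℝ)|) ^ 2)⁻¹) = P⁻¹ := by
    rw [hPdef, ← Finset.prod_inv_distrib]
  have hP0 : 0 < P := Finset.prod_pos fun i _ => by positivity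
  have hPA : P ≤ (1 + ‖intVec w‖) ^ (2 * n) := by
    rw [mul_comm, pow_mul']
    calc P ≤ ∏ _i : Fin n, (1 + ‖intVec w‖) ^ 2 := by
          refine Finset.prod_le_prod (fun i _ => by positivity) (fun i _ => ?_)
          have hwi : |(w i : ℝ)| ≤ ‖intVec w‖ := by
            simpa [intVec] using norm_le_pi_norm (intVec w) i
          have h0 : (0:ℝ) ≤ 1 + |(w i : ℝ)| := by positivity
          exact pow_le_pow_left₀ h0 (by linarith) 2
      _ = ((1 + ‖intVec w‖) ^ 2) ^ n := by
          rw [Finset.prod_const, Finset.card_univ, Fintype.card_fin]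
  have hAB : 1 + ‖intVec w‖ ≤ (1 + ‖y‖) * (1 + ‖y + intVec w‖) := by
    have h1 : ‖intVec w‖ ≤ ‖y + intVec w‖ + ‖y‖ := by
      calc ‖intVec w‖ = ‖(y + intVec w) - y‖ := by congr 1; abel
        _ ≤ ‖y + intVec w‖ + ‖y‖ := norm_sub_le _ _
    nlinarith [norm_nonneg y, norm_nonneg (y + intVec w)]
  have hPB : P ≤ (1 + ‖y‖) ^ (2 * n) * (1 + ‖y + intVec w‖) ^ (2 * n) := by
    calc P ≤ (1 + ‖intVec w‖) ^ (2 * n) := hPA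
      _ ≤ ((1 + ‖y‖) * (1 + ‖y + intVec w‖)) ^ (2 * n) :=
          pow_le_pow_left₀ (by positivity) hAB _
      _ = _ := mul_pow _ _ _
  have hB0 : (0:ℝ) < (1 + ‖y + intVec w‖) ^ (2 * n) := by positivity
  have hkey : ((1 + ‖y + intVec w‖) ^ (2 * n))⁻¹ ≤ (1 + ‖y‖) ^ (2 * n) * P⁻¹ := by
    rw [inv_le_iff_one_le_mul₀ hB0]
    calc (1:ℝ) = P * P⁻¹ := (mul_inv_cancel₀ hP0.ne').symm
      _ ≤ ((1 + ‖y‖) ^ (2*n) * (1 + ‖y + intVec w‖) ^ (2*n)) * P⁻¹ := by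
          exact mul_le_mul_of_nonneg_right hPB (by positivity)
      _ = (1 + ‖y‖) ^ (2*n) * P⁻¹ * (1 + ‖y + intVec w‖) ^ (2*n) := by ring
  calc ‖ξ (y + intVec w)‖ ≤ C * ((1 + ‖y + intVec w‖) ^ (2 * n))⁻¹ := hC _
    _ ≤ C * ((1 + ‖y‖) ^ (2 * n) * P⁻¹) := mul_le_mul_of_nonneg_left hkey hC0
    _ = C * (1 + ‖y‖) ^ (2 * n) * (∏ i, (((1:ℝ) + |(w i : ℝ)|) ^ 2)⁻¹) := by
        rw [hProdInv]; ring

end Helpers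

set_option maxHeartbeats 2000000 in
theorem stmt0 {n : ℕ} (Aa Ab Ac : Matrix (Fin n) (Fin n) ℤ)
    (hAa : Aa.IsSymm) (hAb : Ab.IsSymm) (hAc : Ac.IsSymm)
    (hab : (Ab - Aa).det ≠ 0) (hbc : (Ac - Ab).det ≠ 0) (hac : (Ac - Aa).det ≠ 0)
    (ξab ξbc : SchwartzMap (Fin n → ℝ) ℝ)
    (μ ν : Fin n → ℤ)
    (r : ((Fin n → ℤ) ⧸ LinearMap.range (Ac - Aa).mulVecLin) → (Fin n → ℤ))
    (hr : ∀ q, Submodule.Quotient.mk (r q) = q)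
    (x : Fin n → ℝ) :
    Tmap (Ab - Aa) μ ξab x * Tmap (Ac - Ab) ν ξbc x =
      ∑' q : ((Fin n → ℤ) ⧸ LinearMap.range (Ac - Aa).mulVecLin),
        Tmap (Ac - Aa) (r q)
          (fun y => ∑' u : Fin n → ℤ,
            deltaMod (Ab - Aa) μ (-u + r q) * deltaMod (Ac - Ab) ν u *
              (ξab (y + (matR (Ab - Aa))⁻¹.mulVec
                  (intVec u - (matR (Ac - Ab) * (matR (Ac - Aa))⁻¹).mulVec (intVec (r q)))) *
               ξbc (y - (matR (Ac - Ab))⁻¹.mulVec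
                  (intVec u - (matR (Ac - Ab) * (matR (Ac - Aa))⁻¹).mulVec (intVec (r q))))))
          x := by
  classical
  have hsumInt : (Ac - Aa) = (Ab - Aa) + (Ac - Ab) := by abel
  have injAbc := mulVec_int_injective (Ac - Ab) hbc
  have injAac := mulVec_int_injective (Ac - Aa) hac
  set g : ((Fin n → ℤ) ⧸ LinearMap.range (Ac - Aa).mulVecLin) ×
      ((Fin n → ℤ) × (Fin n → ℤ)) → ℝ := fun z =>
    deltaMod (Ab - Aa) μ (-z.2.2 + r z.1) * deltaMod (Ac - Ab) ν z.2.2 *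
      (ξab (x + intVec z.2.1 - (matR (Ac - Aa))⁻¹.mulVec (intVec (r z.1))
          + (matR (Ab - Aa))⁻¹.mulVec (intVec z.2.2
              - (matR (Ac - Ab) * (matR (Ac - Aa))⁻¹).mulVec (intVec (r z.1)))) *
       ξbc (x + intVec z.2.1 - (matR (Ac - Aa))⁻¹.mulVec (intVec (r z.1))
          - (matR (Ac - Ab))⁻¹.mulVec (intVec z.2.2
              - (matR (Ac - Ab) * (matR (Ac - Aa))⁻¹).mulVec (intVec (r z.1))))) with hgd
  have hrange : ∀ p : (Fin n → ℤ) × (Fin n → ℤ), ∃ k : Fin n → ℤ,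
      (Ac - Aa).mulVec k =
        r (Submodule.Quotient.mk (μ + ν + (Ac - Ab).mulVec (p.1 - p.2)))
          - (μ + ν + (Ac - Ab).mulVec (p.1 - p.2)) := by
    intro p
    have h := hr (Submodule.Quotient.mk (μ + ν + (Ac - Ab).mulVec (p.1 - p.2)))
    rw [Submodule.Quotient.eq] at h
    obtain ⟨k, hk⟩ := h
    refine ⟨k, ?_⟩
    rw [Matrix.mulVecLin_apply] at hk
    exact hk
  set Ψ : (Fin n → ℤ) × (Fin n → ℤ) →
      ((Fin n → ℤ) ⧸ LinearMap.range (Ac - Aa).mulVecLin) ×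
        ((Fin n → ℤ) × (Fin n → ℤ)) := fun p =>
    (Submodule.Quotient.mk (μ + ν + (Ac - Ab).mulVec (p.1 - p.2)),
      (p.1 + (hrange p).choose,
        ν + (Ac - Ab).mulVec ((hrange p).choose + p.1 - p.2))) with hΨd
  -- injectivity of Ψ
  have hinj : Function.Injective Ψ := by
    intro p p' hpp
    rw [hΨd] at hpp
    simp only [Prod.mk.injEq] at hpp
    obtain ⟨hq, hw, hu⟩ := hpp
    have hk := (hrange p).choose_spec
    have hk' := (hrange p').choose_spec
    set k := (hrange p).choose with hkd
    set k' := (hrange p').choose with hkd'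
    have e1 : k + p.1 - p.2 = k' + p'.1 - p'.2 := by
      apply injAbc
      have h2 := congrArg (fun v => v - ν) hu
      simpa using h2
    have h2eq : p.2 = p'.2 := by
      have t : p.2 = p.1 + k - (k + p.1 - p.2) := by abel
      rw [t, hw, e1]; abel
    have hkk : k - k' = p'.1 - p.1 := by
      rw [sub_eq_sub_iff_add_eq_add, add_comm k p.1]
      exact hw
    have hd : (Ac - Aa).mulVec (k - k') =
        (Ac - Ab).mulVec (p'.1 - p'.2) - (Ac - Ab).mulVec (p.1 - p.2) := by
      rw [Matrix.mulVec_sub, hk, hk', hq]; abel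
    have h5 : (p'.1 - p'.2) - (p.1 - p.2) = k - k' := by
      rw [hkk, h2eq]; abel
    have hd2 : (Ac - Aa).mulVec (k - k') = (Ac - Ab).mulVec (k - k') := by
      rw [hd, ← Matrix.mulVec_sub, h5]
    have hz : (Ab - Aa).mulVec (k - k') = (Ab - Aa).mulVec 0 := by
      rw [Matrix.mulVec_zero]
      rw [hsumInt, Matrix.add_mulVec] at hd2
      exact add_eq_right.mp hd2
    have h6 : k - k' = 0 := mulVec_int_injective (Ab - Aa) hab hz
    have h1eq : p.1 = p'.1 := by
      have := hkk; rw [h6] at this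
      exact (sub_eq_zero.mp this.symm).symm
    exact Prod.ext h1eq h2eq
  -- g vanishes off the range of Ψ
  have hvan : ∀ z, z ∉ Set.range Ψ → g z = 0 := by
    intro z hz
    by_contra hgz
    apply hz
    obtain ⟨q, w, u⟩ := z
    obtain ⟨m1, hm1⟩ : ∃ m, (-u + r q) - μ = (Ab - Aa).mulVec m := by
      by_contra hcon
      exact hgz (by rw [hgd]; simp only [deltaMod, if_neg hcon]; ring)
    obtain ⟨m2, hm2⟩ : ∃ m, u - ν = (Ac - Ab).mulVec m := by
      by_contra hcon
      exact hgz (by rw [hgd]; simp only [deltaMod, if_neg hcon]; ring)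
    have hu : u = ν + (Ac - Ab).mulVec m2 := by rw [← hm2]; abel
    have hrq : r q = u + μ + (Ab - Aa).mulVec m1 := by rw [← hm1]; abel
    refine ⟨(w - m1, w - m2), ?_⟩
    have hmk : (Submodule.Quotient.mk (μ + ν + (Ac - Ab).mulVec ((w - m1) - (w - m2)))
        : (Fin n → ℤ) ⧸ LinearMap.range (Ac - Aa).mulVecLin) = q := by
      rw [← hr q, Submodule.Quotient.eq]
      refine ⟨-m1, ?_⟩
      rw [Matrix.mulVecLin_apply, Matrix.mulVec_neg]
      rw [hrq, hu, hsumInt, Matrix.add_mulVec]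
      simp only [Matrix.mulVec_sub]
      abel
    have hkspec : (Ac - Aa).mulVec ((hrange (w - m1, w - m2)).choose) =
        r (Submodule.Quotient.mk (μ + ν + (Ac - Ab).mulVec ((w - m1) - (w - m2))))
          - (μ + ν + (Ac - Ab).mulVec ((w - m1) - (w - m2))) :=
      (hrange (w - m1, w - m2)).choose_spec
    have hkval : (hrange (w - m1, w - m2)).choose = m1 := by
      apply injAac
      rw [hkspec, hmk, hrq, hu, hsumInt, Matrix.add_mulVec]
      simp only [Matrix.mulVec_sub]
      abel
    rw [hΨd]
    have c2 : (w - m1, w - m2).1 + (hrange (w - m1, w - m2)).choose = w := by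
      rw [hkval]; show w - m1 + m1 = w; abel
    have c3 : ν + (Ac - Ab).mulVec ((hrange (w - m1, w - m2)).choose
        + (w - m1, w - m2).1 - (w - m1, w - m2).2) = u := by
      rw [hkval]
      have h7 : m1 + (w - m1, w - m2).1 - (w - m1, w - m2).2 = m2 := by
        show m1 + (w - m1) - (w - m2) = m2; abel
      rw [h7, ← hu]
    exact Prod.ext hmk (Prod.ext c2 c3)
  -- value of g on the range of Ψ
  have hgΨ : ∀ p : (Fin n → ℤ) × (Fin n → ℤ), g (Ψ p) =
      ξab (x + intVec p.1 - (matR (Ab - Aa))⁻¹.mulVec (intVec μ)) *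
      ξbc (x + intVec p.2 - (matR (Ac - Ab))⁻¹.mulVec (intVec ν)) := by
    intro p
    have hk : (Ac - Aa).mulVec ((hrange p).choose) =
        r (Submodule.Quotient.mk (μ + ν + (Ac - Ab).mulVec (p.1 - p.2)))
          - (μ + ν + (Ac - Ab).mulVec (p.1 - p.2)) := (hrange p).choose_spec
    set k := (hrange p).choose with hkd
    have hrq : r (Submodule.Quotient.mk (μ + ν + (Ac - Ab).mulVec (p.1 - p.2)))
        = (μ + ν + (Ac - Ab).mulVec (p.1 - p.2)) + (Ac - Aa).mulVec k := by
      rw [hk]; abel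
    have hm2 : (ν + (Ac - Ab).mulVec (k + p.1 - p.2)) - ν
        = (Ac - Ab).mulVec (k + p.1 - p.2) := by abel
    have hm1 : (-(ν + (Ac - Ab).mulVec (k + p.1 - p.2))
          + r (Submodule.Quotient.mk (μ + ν + (Ac - Ab).mulVec (p.1 - p.2)))) - μ
        = (Ab - Aa).mulVec k := by
      rw [hrq, hsumInt, Matrix.add_mulVec]
      simp only [Matrix.mulVec_sub, Matrix.mulVec_add]
      abel
    have hd1 : deltaMod (Ab - Aa) μ (-(ν + (Ac - Ab).mulVec (k + p.1 - p.2))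
        + r (Submodule.Quotient.mk (μ + ν + (Ac - Ab).mulVec (p.1 - p.2)))) = 1 := by
      rw [deltaMod, if_pos ⟨k, hm1⟩]
    have hd2 : deltaMod (Ac - Ab) ν (ν + (Ac - Ab).mulVec (k + p.1 - p.2)) = 1 := by
      rw [deltaMod, if_pos ⟨k + p.1 - p.2, hm2⟩]
    have harg1 := arg1 (Ab - Aa) (Ac - Ab) (Ac - Aa) hsumInt hab hac
      (ν + (Ac - Ab).mulVec (k + p.1 - p.2))
      (r (Submodule.Quotient.mk (μ + ν + (Ac - Ab).mulVec (p.1 - p.2)))) μ k hm1 x (p.1 + k)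
    have harg2 := arg2 (Ac - Ab) (Ac - Aa) hbc
      (ν + (Ac - Ab).mulVec (k + p.1 - p.2))
      (r (Submodule.Quotient.mk (μ + ν + (Ac - Ab).mulVec (p.1 - p.2)))) ν
      (k + p.1 - p.2) hm2 x (p.1 + k)
    have hw1 : p.1 + k - k = p.1 := by abel
    have hw2 : p.1 + k - (k + p.1 - p.2) = p.2 := by abel
    rw [hw1] at harg1
    rw [hw2] at harg2
    show deltaMod (Ab - Aa) μ (-(ν + (Ac - Ab).mulVec (k + p.1 - p.2))
          + r (Submodule.Quotient.mk (μ + ν + (Ac - Ab).mulVec (p.1 - p.2)))) *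
        deltaMod (Ac - Ab) ν (ν + (Ac - Ab).mulVec (k + p.1 - p.2)) *
      (ξab (x + intVec (p.1 + k)
          - (matR (Ac - Aa))⁻¹.mulVec (intVec
              (r (Submodule.Quotient.mk (μ + ν + (Ac - Ab).mulVec (p.1 - p.2)))))
          + (matR (Ab - Aa))⁻¹.mulVec (intVec (ν + (Ac - Ab).mulVec (k + p.1 - p.2))
              - (matR (Ac - Ab) * (matR (Ac - Aa))⁻¹).mulVec (intVec
                  (r (Submodule.Quotient.mk (μ + ν + (Ac - Ab).mulVec (p.1 - p.2))))))) *
       ξbc (x + intVec (p.1 + k)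
          - (matR (Ac - Aa))⁻¹.mulVec (intVec
              (r (Submodule.Quotient.mk (μ + ν + (Ac - Ab).mulVec (p.1 - p.2)))))
          - (matR (Ac - Ab))⁻¹.mulVec (intVec (ν + (Ac - Ab).mulVec (k + p.1 - p.2))
              - (matR (Ac - Ab) * (matR (Ac - Aa))⁻¹).mulVec (intVec
                  (r (Submodule.Quotient.mk (μ + ν + (Ac - Ab).mulVec (p.1 - p.2)))))))) = _
    rw [hd1, hd2, harg1, harg2, one_mul, one_mul]
  -- summability
  have ha : Summable fun w1 : Fin n → ℤ =>
      ‖ξab (x + intVec w1 - (matR (Ab - Aa))⁻¹.mulVec (intVec μ))‖ := by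
    refine (summable_schwartz ξab (x - (matR (Ab - Aa))⁻¹.mulVec (intVec μ))).congr fun w => ?_
    rw [sub_add_eq_add_sub]
  have hb : Summable fun w2 : Fin n → ℤ =>
      ‖ξbc (x + intVec w2 - (matR (Ac - Ab))⁻¹.mulVec (intVec ν))‖ := by
    refine (summable_schwartz ξbc (x - (matR (Ac - Ab))⁻¹.mulVec (intVec ν))).congr fun w => ?_
    rw [sub_add_eq_add_sub]
  have hprod : Summable fun p : (Fin n → ℤ) × (Fin n → ℤ) =>
      ξab (x + intVec p.1 - (matR (Ab - Aa))⁻¹.mulVec (intVec μ)) *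
      ξbc (x + intVec p.2 - (matR (Ac - Ab))⁻¹.mulVec (intVec ν)) :=
    summable_mul_of_summable_norm ha hb
  have hgsum : Summable g :=
    (hinj.summable_iff hvan).mp (hprod.congr fun p => (hgΨ p).symm)
  have hsupp : Function.support g ⊆ Set.range Ψ := by
    intro z hz
    by_contra h
    exact hz (hvan z h)
  -- final chain
  calc Tmap (Ab - Aa) μ ξab x * Tmap (Ac - Ab) ν ξbc x
      = ∑' p : (Fin n → ℤ) × (Fin n → ℤ),
          ξab (x + intVec p.1 - (matR (Ab - Aa))⁻¹.mulVec (intVec μ)) *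
          ξbc (x + intVec p.2 - (matR (Ac - Ab))⁻¹.mulVec (intVec ν)) := by
        rw [Tmap, Tmap]
        exact tsum_mul_tsum_of_summable_norm ha hb
    _ = ∑' p : (Fin n → ℤ) × (Fin n → ℤ), g (Ψ p) := tsum_congr fun p => (hgΨ p).symm
    _ = ∑' z, g z := hinj.tsum_eq hsupp
    _ = ∑' (q : (Fin n → ℤ) ⧸ LinearMap.range (Ac - Aa).mulVecLin),
          ∑' wp : (Fin n → ℤ) × (Fin n → ℤ), g (q, wp) :=
        Summable.tsum_prod' hgsum hgsum.prod_factor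
    _ = ∑' (q : (Fin n → ℤ) ⧸ LinearMap.range (Ac - Aa).mulVecLin),
          ∑' (w : Fin n → ℤ), ∑' (u : Fin n → ℤ), g (q, (w, u)) :=
        tsum_congr fun q => Summable.tsum_prod' (hgsum.prod_factor q) (hgsum.prod_factor q).prod_factor
    _ = _ := by
        rw [hgd]
        simp only [Tmap]
end
end

section
/- The change of variables (v, v') = M(u, w) - (ρ, 0), where M is the 2n×2n block matrix with rows (1_n, A_{ab}; -1_n, A_{bc}), gives a bijection between ℤⁿ × ℤⁿ and the disjoint union over ρ ∈ ℤⁿ/A_{ac}ℤⁿ of ℤⁿ × ℤⁿ; i.e., the map (u, w, ρ) ↦ (u + A_{ab}w - ρ, -u + A_{bc}w) is a bijection from ℤⁿ × ℤⁿ × (ℤⁿ/A_{ac}ℤⁿ) onto ℤⁿ × ℤⁿ, where ρ ranges over a fixed set of coset representatives. -/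
open Matrix

theorem stmt1 {n : ℕ} (Aa Ab Ac : Matrix (Fin n) (Fin n) ℤ)
    (hAa : Aa.IsSymm) (hAb : Ab.IsSymm) (hAc : Ac.IsSymm)
    (hab : (Ab - Aa).det ≠ 0) (hbc : (Ac - Ab).det ≠ 0) (hac : (Ac - Aa).det ≠ 0)
    (r : ((Fin n → ℤ) ⧸ LinearMap.range (Ac - Aa).mulVecLin) → (Fin n → ℤ))
    (hr : ∀ q, Submodule.Quotient.mk (r q) = q) :
    Function.Bijective
      (fun p : (Fin n → ℤ) × (Fin n → ℤ) ×
          ((Fin n → ℤ) ⧸ LinearMap.range (Ac - Aa).mulVecLin) =>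
        (p.1 + (Ab - Aa).mulVec p.2.1 - r p.2.2,
         -p.1 + (Ac - Ab).mulVec p.2.1)) := by
  have hsum : ∀ w : Fin n → ℤ,
      (Ab - Aa).mulVec w + (Ac - Ab).mulVec w = (Ac - Aa).mulVec w := by
    intro w
    rw [← Matrix.add_mulVec]
    congr 1
    abel
  have hinj : Function.Injective (Ac - Aa).mulVec := by
    intro x y hxy
    have h0 : (Ac - Aa).mulVec (x - y) = 0 := by
      rw [Matrix.mulVec_sub, hxy, sub_self]
    have h1 : (Ac - Aa).adjugate.mulVec ((Ac - Aa).mulVec (x - y))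
        = (Ac - Aa).det • (x - y) := by
      rw [Matrix.mulVec_mulVec, Matrix.adjugate_mul, Matrix.smul_mulVec,
        Matrix.one_mulVec]
    rw [h0, Matrix.mulVec_zero] at h1
    have h2 : x - y = 0 := by
      funext i
      have := congrFun h1.symm i
      simp only [Pi.smul_apply, smul_eq_mul, Pi.zero_apply] at this ⊢
      exact (mul_eq_zero.mp this).resolve_left hac
    exact sub_eq_zero.mp h2
  have hmk : ∀ w : Fin n → ℤ,
      (Submodule.Quotient.mk ((Ac - Aa).mulVec w) :
        (Fin n → ℤ) ⧸ LinearMap.range (Ac - Aa).mulVecLin) = 0 := by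
    intro w
    rw [Submodule.Quotient.mk_eq_zero]
    exact ⟨w, rfl⟩
  constructor
  · rintro ⟨u1, w1, q1⟩ ⟨u2, w2, q2⟩ h
    simp only [Prod.mk.injEq] at h
    obtain ⟨h1, h2⟩ := h
    have hs : (Ac - Aa).mulVec w1 - r q1 = (Ac - Aa).mulVec w2 - r q2 := by
      have h3 := congrArg₂ (· + ·) h1 h2
      rw [← hsum w1, ← hsum w2]
      have e1 : (Ab - Aa).mulVec w1 + (Ac - Ab).mulVec w1 - r q1
          = u1 + (Ab - Aa).mulVec w1 - r q1 + (-u1 + (Ac - Ab).mulVec w1) := by abel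
      have e2 : (Ab - Aa).mulVec w2 + (Ac - Ab).mulVec w2 - r q2
          = u2 + (Ab - Aa).mulVec w2 - r q2 + (-u2 + (Ac - Ab).mulVec w2) := by abel
      rw [e1, e2, h3]
    have hq : q1 = q2 := by
      have h4 := congrArg
        (Submodule.Quotient.mk (p := LinearMap.range (Ac - Aa).mulVecLin)) hs
      rw [Submodule.Quotient.mk_sub, Submodule.Quotient.mk_sub, hmk, hmk, hr, hr] at h4
      simpa using h4
    subst hq
    have hw : w1 = w2 := hinj (by
      have : (Ac - Aa).mulVec w1 - r q1 + r q1 = (Ac - Aa).mulVec w2 - r q1 + r q1 := by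
        rw [hs]
      simpa using this)
    subst hw
    have hu : u1 = u2 := by
      have : -u1 = -u2 := by
        have := h2
        simpa using this
      simpa using congrArg Neg.neg this
    exact Prod.ext hu rfl
  · rintro ⟨v, v'⟩
    set q : (Fin n → ℤ) ⧸ LinearMap.range (Ac - Aa).mulVecLin :=
      -(Submodule.Quotient.mk (v + v')) with hq
    have hmem : v + v' + r q ∈ LinearMap.range (Ac - Aa).mulVecLin := by
      rw [← Submodule.Quotient.mk_eq_zero, Submodule.Quotient.mk_add, hr, hq]
      abel
    obtain ⟨w, hw⟩ := hmem
    have hw' : (Ac - Aa).mulVec w = v + v' + r q := hw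
    refine ⟨⟨(Ac - Ab).mulVec w - v', w, q⟩, ?_⟩
    simp only [Prod.mk.injEq]
    constructor
    · have h5 := hsum w
      have : (Ac - Ab).mulVec w - v' + (Ab - Aa).mulVec w - r q
          = (Ac - Aa).mulVec w - v' - r q := by rw [← h5]; abel
      rw [this, hw']
      abel
    · abel
end

section
/- Let θ be a real skew-symmetric n×n matrix and A_a, A_b symmetric complex n×n matrices with A_{ab} := A_b - A_a invertible and 1_n + (√-1/2)(A_a + A_b)θ invertible. Then the matrix M_{ab} := (1_n + (√-1/2)(A_a+A_b)θ)^{-1} A_{ab} is symmetric if and only if A_a θ A_a = A_b θ A_b. -/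
open Matrix

noncomputable section

def matCR {n : ℕ} (A : Matrix (Fin n) (Fin n) ℝ) : Matrix (Fin n) (Fin n) ℂ :=
  A.map (fun x => (x : ℂ))

theorem stmt5 {n : ℕ} (θ : Matrix (Fin n) (Fin n) ℝ) (hθ : θᵀ = -θ)
    (Aa Ab : Matrix (Fin n) (Fin n) ℂ) (ha : Aa.IsSymm) (hb : Ab.IsSymm)
    (hab : IsUnit (Ab - Aa).det)
    (hinv : IsUnit (1 + (Complex.I / 2) • ((Aa + Ab) * matCR θ)).det) :
    ((1 + (Complex.I / 2) • ((Aa + Ab) * matCR θ))⁻¹ * (Ab - Aa)).IsSymm ↔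
      Aa * matCR θ * Aa = Ab * matCR θ * Ab := by
  set T : Matrix (Fin n) (Fin n) ℂ := matCR θ with hT
  have hTt : Tᵀ = -T := by
    ext i j
    simp [hT, matCR, transpose_apply]
    rw [show θ j i = θᵀ i j from rfl, hθ]
    simp
  set D := Ab - Aa with hD
  set P := 1 + (Complex.I / 2) • ((Aa + Ab) * T) with hP
  have hPt : Pᵀ = 1 - (Complex.I / 2) • (T * (Aa + Ab)) := by
    rw [hP]
    simp [transpose_add, transpose_smul, transpose_mul, hTt, ha.eq, hb.eq]
    rw [← sub_eq_add_neg]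
  have hPtdet : IsUnit Pᵀ.det := by rwa [det_transpose]
  have hDt : Dᵀ = D := by simp [hD, transpose_sub, ha.eq, hb.eq]
  have key : P * D - D * Pᵀ = Complex.I • (Ab * T * Ab - Aa * T * Aa) := by
    rw [hPt, hP, hD]
    simp only [add_mul, mul_add, sub_mul, mul_sub, one_mul, mul_one,
      smul_mul_assoc, mul_smul_comm, smul_sub, smul_add, smul_smul, ← mul_assoc]
    module
  constructor
  · intro h
    have h1 : (P⁻¹ * D)ᵀ = P⁻¹ * D := h
    rw [transpose_mul, hDt, transpose_nonsing_inv] at h1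
    have h2 : P * D = D * Pᵀ := by
      have h2' := congrArg (fun X => P * X * Pᵀ) h1
      have h2'' : P * D = D * Pᵀ := by
        simpa [mul_assoc, Matrix.nonsing_inv_mul_cancel_right _ _ hPtdet,
          Matrix.mul_nonsing_inv_cancel_left _ _ hinv,
          Matrix.nonsing_inv_mul_cancel_left _ _ hinv] using h2'
      exact h2''
    have h3 : Complex.I • (Ab * T * Ab - Aa * T * Aa) = 0 := by
      rw [← key, h2, sub_self]
    rcases smul_eq_zero.mp h3 with hI | h4
    · exact absurd hI Complex.I_ne_zero
    · exact (sub_eq_zero.mp h4).symm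
  · intro h
    have h2 : P * D = D * Pᵀ := by
      have h3 : P * D - D * Pᵀ = 0 := by rw [key, h, sub_self, smul_zero]
      exact sub_eq_zero.mp h3
    have h1 : D * (Pᵀ)⁻¹ = P⁻¹ * D := by
      have h1' := congrArg (fun X => P⁻¹ * X * (Pᵀ)⁻¹) h2
      simpa [mul_assoc, Matrix.nonsing_inv_mul_cancel_left _ _ hinv,
        Matrix.mul_nonsing_inv_cancel_right _ _ hPtdet,
        Matrix.mul_nonsing_inv_cancel_left _ _ hPtdet] using h1'
    show (P⁻¹ * D)ᵀ = P⁻¹ * D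
    rw [transpose_mul, hDt, transpose_nonsing_inv, h1]
end
end

section
/- Under the hypotheses A_aθA_a = A_bθA_b = A_cθA_c with A_a, A_b, A_c symmetric and θ skew-symmetric, and with A_{ab}, A_{bc}, A_{ac} := A_{ab}+A_{bc} invertible, the matrix (A_{ab}^{-1} + A_{bc}^{-1})(1_n + √-1 A_b θ)^{-1} is symmetric. -/
open Matrix

theorem stmt8 {n : ℕ} (θ Aa Ab Ac : Matrix (Fin n) (Fin n) ℂ)
    (hθ : θᵀ = -θ) (ha : Aa.IsSymm) (hb : Ab.IsSymm) (hc : Ac.IsSymm)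
    (hcond1 : Aa * θ * Aa = Ab * θ * Ab) (hcond2 : Ab * θ * Ab = Ac * θ * Ac)
    (hab : IsUnit (Ab - Aa).det) (hbc : IsUnit (Ac - Ab).det)
    (hac : IsUnit (Ac - Aa).det)
    (hinv : IsUnit (1 + Complex.I • (Ab * θ)).det) :
    (((Ab - Aa)⁻¹ + (Ac - Ab)⁻¹) * (1 + Complex.I • (Ab * θ))⁻¹).IsSymm := by
  set P := Ab - Aa with hP
  set Q := Ac - Ab with hQ
  set M := 1 + Complex.I • (Ab * θ) with hM
  set S := P⁻¹ + Q⁻¹ with hSdef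
  have hMTdet : IsUnit Mᵀ.det := by rwa [det_transpose]
  have hMT : Mᵀ = 1 - Complex.I • (θ * Ab) := by
    rw [hM]
    simp [transpose_add, transpose_smul, transpose_mul, hθ, hb.eq, sub_eq_add_neg]
  -- key identity 1
  have e1 : Ab * θ * P + P * (θ * Ab) = P * θ * P := by
    have h : Ab * θ * P + P * (θ * Ab) = P * θ * P + (Ab * θ * Ab - Aa * θ * Aa) := by
      rw [hP]; noncomm_ring
    rw [h, hcond1, sub_self, add_zero]
  have e2 : Ab * θ * Q + Q * (θ * Ab) = -(Q * θ * Q) := by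
    have h : Ab * θ * Q + Q * (θ * Ab) = -(Q * θ * Q) + (Ac * θ * Ac - Ab * θ * Ab) := by
      rw [hQ]; noncomm_ring
    rw [h, hcond2, sub_self, add_zero]
  have h1 : P⁻¹ * Ab * θ + θ * Ab * P⁻¹ = θ := by
    have := congrArg (fun X => P⁻¹ * X * P⁻¹) e1
    simp only [Matrix.mul_add, Matrix.add_mul, Matrix.mul_assoc] at this
    rw [Matrix.nonsing_inv_mul_cancel_left _ _ hab,
        Matrix.nonsing_inv_mul_cancel_left _ _ hab] at this
    simp only [← Matrix.mul_assoc] at this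
    rw [Matrix.mul_nonsing_inv_cancel_right _ _ hab,
        Matrix.mul_nonsing_inv_cancel_right _ _ hab] at this
    exact this
  have h2 : Q⁻¹ * Ab * θ + θ * Ab * Q⁻¹ = -θ := by
    have := congrArg (fun X => Q⁻¹ * X * Q⁻¹) e2
    simp only [Matrix.mul_add, Matrix.add_mul, Matrix.mul_assoc, Matrix.mul_neg,
      Matrix.neg_mul] at this
    rw [Matrix.nonsing_inv_mul_cancel_left _ _ hbc,
        Matrix.nonsing_inv_mul_cancel_left _ _ hbc] at this
    simp only [← Matrix.mul_assoc] at this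
    rw [Matrix.mul_nonsing_inv_cancel_right _ _ hbc] at this
    rw [Matrix.mul_nonsing_inv_cancel_right _ _ hbc] at this
    exact this
  have key : S * (Ab * θ) + (θ * Ab) * S = 0 := by
    rw [hSdef, Matrix.add_mul, Matrix.mul_add]
    simp only [← Matrix.mul_assoc]
    calc P⁻¹ * Ab * θ + Q⁻¹ * Ab * θ + (θ * Ab * P⁻¹ + θ * Ab * Q⁻¹)
        = (P⁻¹ * Ab * θ + θ * Ab * P⁻¹) + (Q⁻¹ * Ab * θ + θ * Ab * Q⁻¹) := by
          abel
      _ = θ + -θ := by rw [h1, h2]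
      _ = 0 := add_neg_cancel θ
  have hST : Sᵀ = S := by
    rw [hSdef, transpose_add, transpose_nonsing_inv, transpose_nonsing_inv,
      hP, hQ, transpose_sub, transpose_sub, ha.eq, hb.eq, hc.eq]
  have hcomm : S * M = Mᵀ * S := by
    rw [hMT, hM, Matrix.mul_add, Matrix.sub_mul, Matrix.mul_one, Matrix.one_mul,
      Matrix.mul_smul, Matrix.smul_mul]
    rw [show S * (Ab * θ) = -((θ * Ab) * S) from by
      rw [eq_neg_iff_add_eq_zero]; exact key]
    rw [smul_neg, sub_eq_add_neg]
  have final : (Mᵀ)⁻¹ * S = S * M⁻¹ := by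
    have h := congrArg (fun X => (Mᵀ)⁻¹ * X * M⁻¹) hcomm
    simp only [Matrix.mul_assoc] at h
    rw [Matrix.mul_nonsing_inv _ hinv, Matrix.mul_one,
        Matrix.nonsing_inv_mul_cancel_left _ _ hMTdet] at h
    exact h
  rw [Matrix.IsSymm, transpose_mul, transpose_nonsing_inv, hST]
  exact final
end
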